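/- Let n be a finite nonempty index type, d : n → ℝ an injective function, and D = Matrix.diagonal d. Then the set S = {Q : Matrix n n ℝ | Q * Qᵀ = 1 ∧ Q * D = D * Q} of orthogonal matrices commuting with D equals the set of diagonal sign matrices {Matrix.diagonal ε | ε : n → ℝ, ∀ i, ε i = 1 ∨ ε i = -1}; in particular S is finite, with cardinality 2^(card n). Hence enforcing the zero-lag constraint together with a second lagged covariance constraint with pairwise distinct diagonal entries reduces the continuous right-orthogonal ambiguity to a finite residual group. -/
import Mathlib

open Matrix

theorem orthogonal_commutant_of_distinct_diagonal_eq_sign_matrices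
    {n : Type*} [Fintype n] [DecidableEq n] [Nonempty n]
    (d : n → ℝ) (hd : Function.Injective d) :
    {Q : Matrix n n ℝ | Q * Qᵀ = 1 ∧ Q * Matrix.diagonal d = Matrix.diagonal d * Q}
        = {M : Matrix n n ℝ |
            ∃ ε : n → ℝ, (∀ i, ε i = 1 ∨ ε i = -1) ∧ M = Matrix.diagonal ε}
    ∧ {Q : Matrix n n ℝ | Q * Qᵀ = 1 ∧ Q * Matrix.diagonal d = Matrix.diagonal d * Q}.Finite
    ∧ {Q : Matrix n n ℝ |
         Q * Qᵀ = 1 ∧ Q * Matrix.diagonal d = Matrix.diagonal d * Q}.ncard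
        = 2 ^ (Fintype.card n) := by
  have hset : {Q : Matrix n n ℝ | Q * Qᵀ = 1 ∧ Q * Matrix.diagonal d = Matrix.diagonal d * Q}
      = {M : Matrix n n ℝ |
          ∃ ε : n → ℝ, (∀ i, ε i = 1 ∨ ε i = -1) ∧ M = Matrix.diagonal ε} := by
    ext Q
    constructor
    · rintro ⟨horth, hcomm⟩
      have hdiagQ : Q = Matrix.diagonal (fun i => Q i i) := by
        ext i j
        by_cases hij : i = j
        · subst hij; simp
        · have h1 := congrFun (congrFun hcomm i) j
          rw [Matrix.mul_diagonal, Matrix.diagonal_mul] at h1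
          have hdd : d j - d i ≠ 0 := sub_ne_zero.mpr (fun h => hij (hd h).symm)
          have : Q i j * (d j - d i) = 0 := by ring_nf; linarith [h1]
          simp [Matrix.diagonal, hij]
          rcases mul_eq_zero.mp this with h | h
          · exact h
          · exact absurd h hdd
      refine ⟨fun i => Q i i, fun i => ?_, hdiagQ⟩
      have := congrFun (congrFun horth i) i
      rw [hdiagQ] at this
      rw [Matrix.diagonal_transpose, Matrix.diagonal_mul_diagonal] at this
      simp [Matrix.diagonal, Matrix.one_apply] at this
      exact mul_self_eq_one_iff.mp this
    · rintro ⟨ε, hε, rfl⟩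
      constructor
      · rw [Matrix.diagonal_transpose, Matrix.diagonal_mul_diagonal]
        have : (fun i => ε i * ε i) = fun _ => (1:ℝ) := by
          funext i; rcases hε i with h | h <;> rw [h] <;> ring
        rw [this]; exact Matrix.diagonal_one
      · rw [Matrix.diagonal_mul_diagonal, Matrix.diagonal_mul_diagonal]
        simp [mul_comm]
  refine ⟨hset, ?_⟩
  set f : (n → Bool) → Matrix n n ℝ :=
    fun b => Matrix.diagonal (fun i => if b i then 1 else -1) with hf
  have hrange : {M : Matrix n n ℝ |
      ∃ ε : n → ℝ, (∀ i, ε i = 1 ∨ ε i = -1) ∧ M = Matrix.diagonal ε} = Set.range f := by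
    ext M
    constructor
    · rintro ⟨ε, hε, rfl⟩
      refine ⟨fun i => decide (ε i = 1), ?_⟩
      have he : (fun i => if decide (ε i = 1) = true then (1:ℝ) else -1) = ε := by
        funext i; rcases hε i with h | h <;> simp [h] <;> intro hc <;> linarith
      simp only [hf, he]
    · rintro ⟨b, rfl⟩
      exact ⟨fun i => if b i then 1 else -1, fun i => by by_cases h : b i <;> simp [h], rfl⟩
  have hinj : Function.Injective f := by
    intro b b' h
    funext i
    have := congrFun (congrFun h i) i
    simp only [hf, Matrix.diagonal_apply_eq] at this
    by_cases hb : b i <;> by_cases hb' : b' i <;> simp [hb, hb'] at this ⊢ <;> linarith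
  rw [hset, hrange]
  refine ⟨Set.finite_range f, ?_⟩
  rw [← Set.image_univ, Set.ncard_image_of_injective _ hinj, Set.ncard_univ]
  simp [Nat.card_eq_fintype_card]
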